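/- arXiv:2001.08275 — 3 statements merged into one kernel-verified Lean document; each statement's English description precedes it below -/
import Mathlib

section
/- Let G = (V, E) be a finite graph and x : E → {0,1}. Then x satisfies the multicut constraint Σ_{e ∈ C \ {e'}} x(e) ≥ x(e') for every cycle C and e' ∈ C if and only if x satisfies it for every chordless cycle C and every e' ∈ C. -/
/-!
A cycle `C` with a chord `ab` splits into two shorter cycles `C₁ = P₁ + ab` and `C₂ = P₂ + ab`,
where `P₁, P₂` are the two `a`–`b` arcs of `C`. If `e' ∈ P₁`, the inequality for `C₁` bounds
`x e'` by `x(ab)` plus the rest of `P₁`, and the inequality for `C₂` bounds `x(ab)` by the sum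
over `P₂`; together they give the inequality for `C`. Induction on the length of the cycle
reduces every cycle to chordless ones.
-/

open SimpleGraph Walk

namespace Finset

variable {α M : Type*} [DecidableEq α] [AddCommMonoid M] [PartialOrder M] [IsOrderedAddMonoid M]

lemma le_sum_erase_union_of_le_sum_erase_insert {x : α → M} {s t : Finset α} {c e : α}
    (hst : Disjoint s t) (hcs : c ∉ s) (hct : c ∉ t) (he : e ∈ s)
    (hes : x e ≤ ∑ i ∈ (insert c s).erase e, x i)
    (hc : x c ≤ ∑ i ∈ (insert c t).erase c, x i) :
    x e ≤ ∑ i ∈ (s ∪ t).erase e, x i := by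
  have hce : c ≠ e := fun h => hcs (h ▸ he)
  have het : e ∉ t := disjoint_left.mp hst he
  rw [erase_insert_of_ne hce, sum_insert fun h => hcs (mem_of_mem_erase h)] at hes
  rw [erase_insert hct] at hc
  rw [erase_union_distrib, erase_eq_of_notMem het,
    sum_union (disjoint_of_subset_left (erase_subset _ _) hst), add_comm]
  calc x e ≤ x c + ∑ i ∈ s.erase e, x i := hes
    _ ≤ ∑ i ∈ t, x i + ∑ i ∈ s.erase e, x i := add_le_add_left hc _

end Finset

namespace SimpleGraph.Walk

variable {V : Type*} [DecidableEq V] {G : SimpleGraph V} {u v a b : V}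

lemma IsCycle.isPath_dropUntil {c : G.Walk v v} (hc : c.IsCycle) (h : u ∈ c.support)
    (huv : u ≠ v) : (c.dropUntil u h).IsPath :=
  IsCycle.isPath_of_append_right (p := c.takeUntil u h) (not_nil_of_ne huv.symm)
    (by rwa [take_spec])

lemma IsCycle.isCycle_cons_takeUntil {c : G.Walk a a} (hc : c.IsCycle) (hb : b ∈ c.support)
    (hab : G.Adj a b) (hch : s(a, b) ∉ c.edges) : (cons hab.symm (c.takeUntil b hb)).IsCycle := by
  rw [cons_isCycle_iff, Sym2.eq_swap]
  exact ⟨hc.isPath_takeUntil hb, fun h => hch (c.edges_takeUntil_subset_edges hb h)⟩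

lemma IsCycle.isCycle_cons_dropUntil {c : G.Walk a a} (hc : c.IsCycle) (hb : b ∈ c.support)
    (hab : G.Adj a b) (hch : s(a, b) ∉ c.edges) : (cons hab (c.dropUntil b hb)).IsCycle := by
  rw [cons_isCycle_iff]
  exact ⟨hc.isPath_dropUntil hb hab.ne.symm, fun h => hch (c.edges_dropUntil_subset_edges hb h)⟩

lemma length_takeUntil_add_length_dropUntil (c : G.Walk u v) (h : a ∈ c.support) :
    (c.takeUntil a h).length + (c.dropUntil a h).length = c.length := by
  rw [← length_append, take_spec]

variable {M : Type*} [AddCommMonoid M] [PartialOrder M]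

def SatisfiesMulticut (x : Sym2 V → M) (c : G.Walk v v) : Prop :=
  ∀ e' ∈ c.edges, x e' ≤ ∑ e ∈ c.edges.toFinset.erase e', x e

lemma satisfiesMulticut_rotate {x : Sym2 V → M} {c : G.Walk v v} (h : u ∈ c.support) :
    (c.rotate u h).SatisfiesMulticut x ↔ c.SatisfiesMulticut x := by
  have hperm := (c.rotate_edges u h).perm
  have hfin : (c.rotate u h).edges.toFinset = c.edges.toFinset :=
    List.toFinset_eq_of_perm _ _ hperm
  simp only [SatisfiesMulticut, hfin, hperm.mem_iff]

lemma IsCycle.satisfiesMulticut_of_chord [IsOrderedAddMonoid M] {x : Sym2 V → M}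
    {c : G.Walk a a} (hc : c.IsCycle) (hb : b ∈ c.support) (hab : G.Adj a b)
    (hch : s(a, b) ∉ c.edges)
    (h₁ : (cons hab.symm (c.takeUntil b hb)).SatisfiesMulticut x)
    (h₂ : (cons hab (c.dropUntil b hb)).SatisfiesMulticut x) : c.SatisfiesMulticut x := by
  set t := c.takeUntil b hb
  set d := c.dropUntil b hb
  have hsplit : t.edges ++ d.edges = c.edges := by rw [← edges_append, take_spec]
  have htd : Disjoint t.edges.toFinset d.edges.toFinset := by
    rw [List.disjoint_toFinset_iff_disjoint]
    exact hc.isTrail.disjoint_edges_takeUntil_dropUntil hb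
  have hct : s(a, b) ∉ t.edges.toFinset := by
    simpa using fun h => hch (c.edges_takeUntil_subset_edges hb h)
  have hcd : s(a, b) ∉ d.edges.toFinset := by
    simpa using fun h => hch (c.edges_dropUntil_subset_edges hb h)
  simp only [SatisfiesMulticut, edges_cons, List.toFinset_cons, List.mem_cons,
    Sym2.eq_swap (a := b)] at h₁ h₂
  intro e' he'
  rw [← hsplit, List.toFinset_append]
  rcases List.mem_append.mp (hsplit ▸ he') with het | hed
  · exact Finset.le_sum_erase_union_of_le_sum_erase_insert htd hct hcd
      (List.mem_toFinset.mpr het) (h₁ e' (.inr het)) (h₂ _ (.inl rfl))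
  · rw [Finset.union_comm]
    exact Finset.le_sum_erase_union_of_le_sum_erase_insert htd.symm hcd hct
      (List.mem_toFinset.mpr hed) (h₂ e' (.inr hed)) (h₁ _ (.inl rfl))

theorem IsCycle.satisfiesMulticut_of_forall_isChordless [IsOrderedAddMonoid M] {x : Sym2 V → M}
    (h : ∀ (u : V) (c : G.Walk u u), c.IsCycle → c.IsChordless → c.SatisfiesMulticut x)
    {c : G.Walk v v} (hc : c.IsCycle) : c.SatisfiesMulticut x := by
  induction hn : c.length using Nat.strong_induction_on generalizing v with
  | _ n ih =>
  by_cases hcl : c.IsChordless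
  · exact h v c hc hcl
  obtain ⟨a, b, ha, hb, hab, hch⟩ :
      ∃ a b, a ∈ c.support ∧ b ∈ c.support ∧ G.Adj a b ∧ s(a, b) ∉ c.edges := by
    simpa [isChordless_iff_forall_mem_edges] using hcl
  set r := c.rotate a ha
  have hr : r.IsCycle := hc.rotate ha
  have hbr : b ∈ r.support := (mem_support_rotate_iff c a ha).mpr hb
  have hchr : s(a, b) ∉ r.edges := fun h => hch ((c.rotate_edges a ha).perm.mem_iff.mp h)
  have h₁ := hr.isCycle_cons_takeUntil hbr hab hchr
  have h₂ := hr.isCycle_cons_dropUntil hbr hab hchr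
  have hlen : (r.takeUntil b hbr).length + (r.dropUntil b hbr).length = n := by
    rw [length_takeUntil_add_length_dropUntil, length_rotate, hn]
  have h₁len := h₁.three_le_length
  have h₂len := h₂.three_le_length
  rw [length_cons] at h₁len h₂len
  rw [← satisfiesMulticut_rotate ha]
  exact hr.satisfiesMulticut_of_chord hbr hab hchr
    (ih _ (by rw [length_cons]; omega) h₁ rfl) (ih _ (by rw [length_cons]; omega) h₂ rfl)

end SimpleGraph.Walk

theorem stmt_6_general {V : Type*} [DecidableEq V] (G : SimpleGraph V)
    (x : Sym2 V → ℕ) :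
    (∀ (v : V) (p : G.Walk v v), p.IsCycle →
      ∀ e' ∈ p.edges, x e' ≤ ∑ e ∈ p.edges.toFinset.erase e', x e) ↔
    (∀ (v : V) (p : G.Walk v v), p.IsCycle →
      (∀ a ∈ p.support, ∀ b ∈ p.support, G.Adj a b → s(a, b) ∈ p.edges) →
      ∀ e' ∈ p.edges, x e' ≤ ∑ e ∈ p.edges.toFinset.erase e', x e) := by
  refine ⟨fun h v p hp _ => h v p hp, fun h v p hp => ?_⟩
  refine IsCycle.satisfiesMulticut_of_forall_isChordless (fun u c hc hcl => ?_) hp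
  exact h u c hc fun a ha b hb hab => isChordless_iff_forall_mem_edges.mp hcl ha hb hab

/-- a binary edge labeling satisfies the multicut inequality for every
cycle iff it satisfies it for every chordless cycle. -/
theorem stmt_6 {V : Type*} [Fintype V] [DecidableEq V] (G : SimpleGraph V)
    (x : Sym2 V → ℕ)
    (hbin : ∀ u v : V, G.Adj u v → x s(u, v) = 0 ∨ x s(u, v) = 1) :
    (∀ (v : V) (p : G.Walk v v), p.IsCycle →
      ∀ e' ∈ p.edges, x e' ≤ ∑ e ∈ p.edges.toFinset.erase e', x e) ↔
    (∀ (v : V) (p : G.Walk v v), p.IsCycle →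
      (∀ a ∈ p.support, ∀ b ∈ p.support, G.Adj a b → s(a, b) ∈ p.edges) →
      ∀ e' ∈ p.edges, x e' ≤ ∑ e ∈ p.edges.toFinset.erase e', x e) :=
  stmt_6_general G x
end

section
/- Counterexample to exactness in 2D (Theorem in paper): there is no function f : ℤ² → ℝ of the form f(z₁, z₂) = αz₁ + βz₂ + γ such that f agrees on the 3×3 grid {0,1,2}² with the array w defined by w(i, j) = aᵢ·j + bᵢ for i ∈ {0,1}, j ∈ {0,1,2}, and w(2,j) determined by the column constraints w(2,j) = 2w(1,j) − w(0,j), whenever a₀ ≠ a₁. Specifically, w(0,0) − 2w(1,1) + w(2,2) = 2(a₁ − a₀) ≠ 0, while any affine f satisfies f(0,0) − 2f(1,1) + f(2,2) = 0. -/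
/-! The diagonal second difference `w 0 0 - 2 w 1 1 + w 2 2` vanishes for every affine function,
but the column constraints propagate the difference of the row slopes to the row `2`, where it
equals `2 (a₁ - a₀)`. -/

section DiagonalSecondDifference

variable (w : ℕ → ℕ → ℝ)

theorem diag_second_diff_eq_zero_of_affine {α β γ : ℝ}
    (hw : ∀ i ≤ 2, ∀ j ≤ 2, w i j = α * i + β * j + γ) :
    w 0 0 - 2 * w 1 1 + w 2 2 = 0 := by
  rw [hw 0 (by norm_num) 0 (by norm_num), hw 1 (by norm_num) 1 (by norm_num),
    hw 2 le_rfl 2 le_rfl]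
  push_cast
  ring

theorem diag_second_diff_eq_of_rows_affine {a₀ a₁ b₀ b₁ : ℝ}
    (h0 : ∀ j ≤ 2, w 0 j = a₀ * j + b₀)
    (h1 : ∀ j ≤ 2, w 1 j = a₁ * j + b₁)
    (h2 : ∀ j ≤ 2, w 2 j = 2 * w 1 j - w 0 j) :
    w 0 0 - 2 * w 1 1 + w 2 2 = 2 * (a₁ - a₀) := by
  rw [h2 2 le_rfl, h0 0 (by norm_num), h0 2 le_rfl, h1 1 (by norm_num), h1 2 le_rfl]
  push_cast
  ring

end DiagonalSecondDifference

/-- counterexample to exactness in 2D. If the rows `0` and `1` of `w` are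
affine in `j` with distinct slopes `a₀ ≠ a₁` and each column has vanishing discrete
second derivative (`w 2 j = 2 * w 1 j - w 0 j`), then
`w 0 0 - 2 * w 1 1 + w 2 2 = 2(a₁ - a₀) ≠ 0`, and no affine function
`f(z₁,z₂) = α z₁ + β z₂ + γ` agrees with `w` on the 3×3 grid `{0,1,2}²`. -/
theorem stmt_9 (a₀ a₁ b₀ b₁ : ℝ) (ha : a₀ ≠ a₁) (w : ℕ → ℕ → ℝ)
    (h0 : ∀ j ≤ 2, w 0 j = a₀ * j + b₀)
    (h1 : ∀ j ≤ 2, w 1 j = a₁ * j + b₁)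
    (h2 : ∀ j ≤ 2, w 2 j = 2 * w 1 j - w 0 j) :
    w 0 0 - 2 * w 1 1 + w 2 2 = 2 * (a₁ - a₀) ∧
    w 0 0 - 2 * w 1 1 + w 2 2 ≠ 0 ∧
    ¬ ∃ α β γ : ℝ, ∀ i ≤ 2, ∀ j ≤ 2, w i j = α * i + β * j + γ := by
  have hdiag := diag_second_diff_eq_of_rows_affine w h0 h1 h2
  have hne : w 0 0 - 2 * w 1 1 + w 2 2 ≠ 0 := by
    rw [hdiag]
    exact mul_ne_zero two_ne_zero (sub_ne_zero.mpr ha.symm)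
  exact ⟨hdiag, hne, fun ⟨_, _, _, hw⟩ => hne (diag_second_diff_eq_zero_of_affine w hw)⟩
end

section
/- Let y : [n] → ℝ be data with n ≥ 2. Then there exists an affine function w : [n] → ℝ, wᵢ = a·i + b, that minimizes Σᵢ |wᵢ − yᵢ| over all affine functions and satisfies wᵢ = yᵢ for at least two distinct indices i. -/
open Finset

lemma sum_mul_sub (ι : Type*) (T : Finset ι) (c d : ι → ℝ) (z : ℝ) :
    ∑ i ∈ T, c i * (z - d i) = z * ∑ i ∈ T, c i - ∑ i ∈ T, c i * d i := by
  rw [Finset.mul_sum, ← Finset.sum_sub_distrib]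
  exact Finset.sum_congr rfl (fun i _ => by ring)

lemma median_aux {ι : Type*} (S : Finset ι) (hS : S.Nonempty)
    (c d : ι → ℝ) (hc : ∀ i ∈ S, 0 < c i) :
    ∃ j ∈ S, ∀ x : ℝ, ∑ i ∈ S, c i * |d j - d i| ≤ ∑ i ∈ S, c i * |x - d i| := by
  classical
  obtain ⟨j, hj, hjmin⟩ := S.exists_min_image (fun m => ∑ i ∈ S, c i * |d m - d i|) hS
  refine ⟨j, hj, fun x => ?_⟩
  suffices h : ∃ m ∈ S, (∑ i ∈ S, c i * |d m - d i|) ≤ ∑ i ∈ S, c i * |x - d i| by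
    obtain ⟨m, hm, hle⟩ := h
    exact le_trans (hjmin m hm) hle
  set P := S.filter (fun i => d i ≤ x) with hPdef
  set Q := S.filter (fun i => ¬ d i ≤ x) with hQdef
  by_cases hPe : P.Nonempty
  · by_cases hQe : Q.Nonempty
    · -- middle case
      obtain ⟨p, hp, hpmax⟩ := P.exists_max_image d hPe
      obtain ⟨q, hq, hqmin⟩ := Q.exists_min_image d hQe
      have hpS : p ∈ S := (Finset.mem_filter.mp hp).1
      have hqS : q ∈ S := (Finset.mem_filter.mp hq).1
      have hpx : d p ≤ x := (Finset.mem_filter.mp hp).2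
      have hxq : x ≤ d q := le_of_lt (lt_of_not_ge (Finset.mem_filter.mp hq).2)
      have key : ∀ z : ℝ, (∀ i ∈ P, d i ≤ z) → (∀ i ∈ Q, z ≤ d i) →
          ∑ i ∈ S, c i * |z - d i| =
            z * (∑ i ∈ P, c i - ∑ i ∈ Q, c i) +
              (∑ i ∈ Q, c i * d i - ∑ i ∈ P, c i * d i) := by
        intro z hzP hzQ
        rw [← Finset.sum_filter_add_sum_filter_not S (fun i => d i ≤ x)
          (fun i => c i * |z - d i|)]
        have h1 : ∑ i ∈ P, c i * |z - d i| = ∑ i ∈ P, c i * (z - d i) :=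
          Finset.sum_congr rfl fun i hi => by
            rw [abs_of_nonneg (by linarith [hzP i hi])]
        have h2 : ∑ i ∈ Q, c i * |z - d i| = ∑ i ∈ Q, c i * (d i - z) :=
          Finset.sum_congr rfl fun i hi => by
            rw [abs_of_nonpos (by linarith [hzQ i hi])]; ring_nf
        have h3 : ∑ i ∈ Q, c i * (d i - z) = (∑ i ∈ Q, c i * d i) - z * ∑ i ∈ Q, c i := by
          rw [Finset.mul_sum, ← Finset.sum_sub_distrib]
          exact Finset.sum_congr rfl (fun i _ => by ring)
        rw [h1, h2, sum_mul_sub, h3]; ring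
      have hxP : ∀ i ∈ P, d i ≤ x := fun i hi => (Finset.mem_filter.mp hi).2
      have hxQ : ∀ i ∈ Q, x ≤ d i := fun i hi =>
        le_of_lt (lt_of_not_ge (Finset.mem_filter.mp hi).2)
      have hpP : ∀ i ∈ P, d i ≤ d p := fun i hi => hpmax i hi
      have hpQ : ∀ i ∈ Q, d p ≤ d i := fun i hi => le_trans hpx (hxQ i hi)
      have hqP : ∀ i ∈ P, d i ≤ d q := fun i hi => le_trans (hxP i hi) hxq
      have hqQ : ∀ i ∈ Q, d q ≤ d i := fun i hi => hqmin i hi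
      rw [key x hxP hxQ]
      by_cases hD : 0 ≤ ∑ i ∈ P, c i - ∑ i ∈ Q, c i
      · refine ⟨p, hpS, ?_⟩
        rw [key (d p) hpP hpQ]
        nlinarith
      · refine ⟨q, hqS, ?_⟩
        rw [key (d q) hqP hqQ]
        nlinarith [lt_of_not_ge hD]
    · -- Q empty : d i ≤ x for all i
      have hall : ∀ i ∈ S, d i ≤ x := by
        intro i hi
        by_contra h
        exact hQe ⟨i, Finset.mem_filter.mpr ⟨hi, h⟩⟩
      obtain ⟨m, hm, hmmax⟩ := S.exists_max_image d hS
      refine ⟨m, hm, Finset.sum_le_sum fun i hi => ?_⟩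
      have h1 : |d m - d i| = d m - d i := abs_of_nonneg (by linarith [hmmax i hi])
      have h2 : |x - d i| = x - d i := abs_of_nonneg (by linarith [hall i hi])
      rw [h1, h2]
      have := hall m hm
      nlinarith [hc i hi]
  · -- P empty : x < d i for all i
    have hall : ∀ i ∈ S, x < d i := by
      intro i hi
      by_contra h
      exact hPe ⟨i, Finset.mem_filter.mpr ⟨hi, not_lt.mp h⟩⟩
    obtain ⟨m, hm, hmmin⟩ := S.exists_min_image d hS
    refine ⟨m, hm, Finset.sum_le_sum fun i hi => ?_⟩
    have h1 : |d m - d i| = d i - d m := by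
      rw [abs_of_nonpos (by linarith [hmmin i hi])]; ring
    have h2 : |x - d i| = d i - x := by
      rw [abs_of_nonpos (by linarith [hall i hi])]; ring
    rw [h1, h2]
    have := hall m hm
    nlinarith [hc i hi]

/-- the ℓ₁ affine regression problem `min_{a,b} ∑ᵢ |a·i + b − yᵢ|` over
`i ∈ {1,…,n}` (n ≥ 2) always attains its minimum at some `(a,b)` that interpolates at
least two of the data points. -/
theorem stmt_15 (n : ℕ) (hn : 2 ≤ n) (y : ℕ → ℝ) :
    ∃ a b : ℝ,
      (∀ a' b' : ℝ,
        ∑ i ∈ Finset.Icc 1 n, |a * i + b - y i| ≤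
          ∑ i ∈ Finset.Icc 1 n, |a' * i + b' - y i|) ∧
      ∃ i ∈ Finset.Icc 1 n, ∃ j ∈ Finset.Icc 1 n,
        i ≠ j ∧ a * i + b = y i ∧ a * j + b = y j := by
  classical
  set val : ℝ → ℝ → ℝ := fun a b => ∑ i ∈ Finset.Icc 1 n, |a * i + b - y i| with hval
  -- candidate two-point lines
  set slope : ℕ × ℕ → ℝ := fun p => (y p.1 - y p.2) / ((p.1 : ℝ) - p.2) with hslope
  set C : Finset (ℕ × ℕ) :=
    ((Finset.Icc 1 n) ×ˢ (Finset.Icc 1 n)).filter (fun p => p.1 ≠ p.2) with hC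
  have hCne : C.Nonempty := by
    refine ⟨(1, 2), Finset.mem_filter.mpr ⟨Finset.mem_product.mpr ⟨?_, ?_⟩, by simp⟩⟩
    · exact Finset.mem_Icc.mpr ⟨le_refl 1, le_trans one_le_two hn⟩
    · exact Finset.mem_Icc.mpr ⟨one_le_two, hn⟩
  obtain ⟨p0, hp0C, hp0min⟩ :=
    C.exists_min_image (fun p => val (slope p) (y p.2 - slope p * p.2)) hCne
  obtain ⟨hp0mem, hp0ne⟩ := Finset.mem_filter.mp hp0C
  obtain ⟨hk0, hj0⟩ := Finset.mem_product.mp hp0mem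
  set a := slope p0 with ha
  set b := y p0.2 - a * p0.2 with hb
  have hcast : ((p0.1 : ℝ) - p0.2) ≠ 0 :=
    sub_ne_zero.mpr (fun h => hp0ne (Nat.cast_inj.mp h))
  refine ⟨a, b, ?_, p0.1, hk0, p0.2, hj0, hp0ne, ?_, by rw [hb]; ring⟩
  · -- minimality
    intro a' b'
    -- Step A : optimize intercept
    have hIccne : (Finset.Icc 1 n).Nonempty :=
      ⟨1, Finset.mem_Icc.mpr ⟨le_refl 1, le_trans one_le_two hn⟩⟩
    obtain ⟨j, hjmem, hmedA⟩ := median_aux (Finset.Icc 1 n) hIccne (fun _ => 1)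
      (fun i => y i - a' * i) (fun i _ => one_pos)
    have hstepA : val a' (y j - a' * j) ≤ val a' b' := by
      have h1 : val a' (y j - a' * j) =
          ∑ i ∈ Finset.Icc 1 n, (1 : ℝ) * |(y j - a' * j) - (y i - a' * i)| :=
        Finset.sum_congr rfl fun i _ => by rw [one_mul]; congr 1; ring
      have h2 : val a' b' =
          ∑ i ∈ Finset.Icc 1 n, (1 : ℝ) * |b' - (y i - a' * i)| :=
        Finset.sum_congr rfl fun i _ => by rw [one_mul]; congr 1; ring
      rw [h1, h2]; exact hmedA b'
    -- Step B : optimize slope through (j, y j)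
    set S' := (Finset.Icc 1 n).erase j with hS'
    have hS'ne : S'.Nonempty := by
      rw [← Finset.card_pos, hS', Finset.card_erase_of_mem hjmem, Nat.card_Icc]
      omega
    set d' : ℕ → ℝ := fun i => (y i - y j) / ((i : ℝ) - j) with hd'
    have hsub : ∀ i ∈ S', ((i : ℝ) - j) ≠ 0 := fun i hi =>
      sub_ne_zero.mpr (fun h => (Finset.ne_of_mem_erase hi) (Nat.cast_inj.mp h))
    obtain ⟨k, hkmem, hmedB⟩ := median_aux S' hS'ne (fun i => |(i : ℝ) - j|) d'
      (fun i hi => abs_pos.mpr (hsub i hi))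
    -- value of line of slope t through (j, y j)
    have hkey : ∀ t : ℝ, val t (y j - t * j) = ∑ i ∈ S', |(i : ℝ) - j| * |t - d' i| := by
      intro t
      show (∑ i ∈ Finset.Icc 1 n, |t * (i : ℝ) + (y j - t * j) - y i|) = _
      rw [← Finset.add_sum_erase _ _ hjmem]
      have hz : t * (j : ℝ) + (y j - t * j) - y j = 0 := by ring
      rw [hz, abs_zero, zero_add]
      refine Finset.sum_congr rfl fun i hi => ?_
      have hne := hsub i hi
      have hdm : ((i : ℝ) - j) * d' i = y i - y j := by
        rw [hd']; field_simp
      have he : t * (i : ℝ) + (y j - t * j) - y i = ((i : ℝ) - j) * (t - d' i) := by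
        rw [mul_sub, hdm]; ring
      rw [he, abs_mul]
    -- line through (k, y k) and (j, y j)
    have hkC : (k, j) ∈ C := Finset.mem_filter.mpr
      ⟨Finset.mem_product.mpr ⟨Finset.mem_of_mem_erase hkmem, hjmem⟩,
        Finset.ne_of_mem_erase hkmem⟩
    have hsl : slope (k, j) = d' k := rfl
    calc val a b ≤ val (slope (k, j)) (y j - slope (k, j) * j) := hp0min (k, j) hkC
      _ = ∑ i ∈ S', |(i : ℝ) - j| * |d' k - d' i| := by rw [hsl, hkey]
      _ ≤ ∑ i ∈ S', |(i : ℝ) - j| * |a' - d' i| := hmedB a'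
      _ = val a' (y j - a' * j) := (hkey a').symm
      _ ≤ val a' b' := hstepA
  · -- interpolation at p0.1
    rw [hb, ha]
    have : slope p0 * ((p0.1 : ℝ) - p0.2) = y p0.1 - y p0.2 := by
      rw [hslope]; field_simp
    nlinarith [this]
end
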